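/- Let E₁, …, E_L and F be real inner product spaces, H : (∏_{l=1}^L E_l) → F a map, a, b ∈ ∏_l E_l, and define the hybrid points w_l ∈ ∏_k E_k for 0 ≤ l ≤ L by (w_l)_k = a_k for k ≤ l and (w_l)_k = b_k for k > l (so w_0 = b, w_L = a). Assume: (i) coordinatewise coercivity: there are η_l ≥ 0 such that for any u, v ∈ ∏_k E_k differing only in coordinate l, ‖H(u) − H(v)‖² ≥ η_l ‖u_l − v_l‖²; and (ii) the increments Δ_l = H(w_l) − H(w_{l−1}) satisfy ⟨Δ_l, Δ_k⟩ ≥ −ρ ‖Δ_l‖ ‖Δ_k‖ for all l ≠ k, with 0 ≤ ρ. Then ‖H(a) − H(b)‖² ≥ (1 − ρ(L − 1)) ∑_{l=1}^L η_l ‖a_l − b_l‖². -/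

import Mathlib

/-!
Writing `Δ_l = H(w_l) − H(w_{l−1})`, the increments telescope to `H(a) − H(b)`, and since
`w_l` and `w_{l−1}` differ only in coordinate `l`, coercivity gives `‖Δ_l‖² ≥ η_l ‖a_l − b_l‖²`.
Expanding `‖∑ Δ_l‖²` and bounding the cross terms by `−ρ ‖Δ_l‖ ‖Δ_k‖` leaves
`(1 + ρ) ∑ ‖Δ_l‖² − ρ (∑ ‖Δ_l‖)²`, and Cauchy–Schwarz `(∑ ‖Δ_l‖)² ≤ L ∑ ‖Δ_l‖²` yields the
factor `1 − ρ (L − 1)`.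
-/

/-- The hybrid point `w_l`: its first `l` coordinates are taken from `a` and the
remaining ones from `b` (so `hybrid a b 0 = b` and `hybrid a b L = a`). -/
def hybrid {L : ℕ} {E : Fin L → Type*} (a b : ∀ l, E l) (l : ℕ) : ∀ k, E k :=
  fun k => if (k : ℕ) < l then a k else b k

open Finset RealInnerProductSpace

section Hybrid

variable {L : ℕ} {E : Fin L → Type*} (a b : ∀ l, E l)

@[simp]
theorem hybrid_zero : hybrid a b 0 = b := by
  funext k
  simp [hybrid]

theorem hybrid_of_le {n : ℕ} (hn : L ≤ n) : hybrid a b n = a := by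
  funext k
  simp [hybrid, k.isLt.trans_le hn]

theorem hybrid_succ_apply_of_ne {l k : Fin L} (hkl : k ≠ l) :
    hybrid a b ((l : ℕ) + 1) k = hybrid a b (l : ℕ) k := by
  have hkl' : (k : ℕ) ≠ l := Fin.val_ne_of_ne hkl
  simp only [hybrid, Nat.lt_succ_iff_lt_or_eq, hkl', or_false]

@[simp]
theorem hybrid_succ_apply_self (l : Fin L) : hybrid a b ((l : ℕ) + 1) l = a l := by
  simp [hybrid]

@[simp]
theorem hybrid_apply_self (l : Fin L) : hybrid a b (l : ℕ) l = b l := by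
  simp [hybrid]

theorem sum_hybrid_increments {F : Type*} [AddCommGroup F] (H : (∀ l, E l) → F) :
    ∑ l : Fin L, (H (hybrid a b ((l : ℕ) + 1)) - H (hybrid a b (l : ℕ))) = H a - H b := by
  rw [Fin.sum_univ_eq_sum_range (fun i => H (hybrid a b (i + 1)) - H (hybrid a b i)),
    sum_range_sub (fun i => H (hybrid a b i)), hybrid_of_le a b le_rfl, hybrid_zero]

end Hybrid

theorem diag_sub_mul_norm_le_inner {F : Type*} [NormedAddCommGroup F] [InnerProductSpace ℝ F]
    {ι : Type*} [DecidableEq ι] {x : ι → F} {ρ : ℝ}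
    (h : ∀ i j, i ≠ j → -(ρ * ‖x i‖ * ‖x j‖) ≤ ⟪x i, x j⟫) (i j : ι) :
    (1 + ρ) * (if i = j then ‖x i‖ ^ 2 else 0) - ρ * (‖x i‖ * ‖x j‖) ≤ ⟪x i, x j⟫ := by
  by_cases hij : i = j
  · subst hij
    rw [if_pos rfl, real_inner_self_eq_norm_sq]
    exact le_of_eq (by ring)
  · rw [if_neg hij]
    linarith [h i j hij]

theorem one_sub_mul_sum_norm_sq_le_norm_sum_sq {F : Type*} [NormedAddCommGroup F]
    [InnerProductSpace ℝ F] {ι : Type*} [Fintype ι] (x : ι → F) {ρ : ℝ} (hρ : 0 ≤ ρ)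
    (h : ∀ i j, i ≠ j → -(ρ * ‖x i‖ * ‖x j‖) ≤ ⟪x i, x j⟫) :
    (1 - ρ * (Fintype.card ι - 1)) * ∑ i, ‖x i‖ ^ 2 ≤ ‖∑ i, x i‖ ^ 2 := by
  classical
  have hcs : (∑ i, ‖x i‖) ^ 2 ≤ Fintype.card ι * ∑ i, ‖x i‖ ^ 2 :=
    sq_sum_le_card_mul_sum_sq
  calc (1 - ρ * (Fintype.card ι - 1)) * ∑ i, ‖x i‖ ^ 2
      = (1 + ρ) * ∑ i, ‖x i‖ ^ 2 - ρ * (Fintype.card ι * ∑ i, ‖x i‖ ^ 2) := by ring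
    _ ≤ (1 + ρ) * ∑ i, ‖x i‖ ^ 2 - ρ * (∑ i, ‖x i‖) ^ 2 := by gcongr
    _ = ∑ i, ∑ j, ((1 + ρ) * (if i = j then ‖x i‖ ^ 2 else 0) - ρ * (‖x i‖ * ‖x j‖)) := by
      simp only [sum_sub_distrib, ← mul_sum, sum_ite_eq, mem_univ, if_true, sq, sum_mul_sum]
    _ ≤ ∑ i, ∑ j, ⟪x i, x j⟫ := by
      gcongr with i _ j _
      exact diag_sub_mul_norm_le_inner h i j
    _ = ‖∑ i, x i‖ ^ 2 := by
      rw [← real_inner_self_eq_norm_sq, sum_inner]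
      simp only [inner_sum]

/-- Hybrid-coordinate lower bound: if `H` is coordinatewise coercive with constants
`η_l ≥ 0`, and the increments `Δ_l = H(w_l) − H(w_{l−1})` along the hybrid sequence from
`b` to `a` satisfy `⟨Δ_l, Δ_k⟩ ≥ −ρ ‖Δ_l‖ ‖Δ_k‖` for `l ≠ k` with `ρ ≥ 0`, then
`‖H(a) − H(b)‖² ≥ (1 − ρ(L − 1)) ∑_l η_l ‖a_l − b_l‖²`. -/
theorem hybrid_coercivity_lower_bound (L : ℕ) (E : Fin L → Type*)
    [∀ l, NormedAddCommGroup (E l)] [∀ l, InnerProductSpace ℝ (E l)]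
    {F : Type*} [NormedAddCommGroup F] [InnerProductSpace ℝ F]
    (H : (∀ l, E l) → F) (a b : ∀ l, E l)
    (η : Fin L → ℝ) (hη : ∀ l, 0 ≤ η l) (ρ : ℝ) (hρ : 0 ≤ ρ)
    (hcoer : ∀ (l : Fin L) (u v : ∀ k, E k), (∀ k : Fin L, k ≠ l → u k = v k) →
      ‖H u - H v‖ ^ 2 ≥ η l * ‖u l - v l‖ ^ 2)
    (hcross : ∀ l k : Fin L, l ≠ k →
      (inner ℝ (H (hybrid a b ((l : ℕ) + 1)) - H (hybrid a b (l : ℕ)))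
          (H (hybrid a b ((k : ℕ) + 1)) - H (hybrid a b (k : ℕ))) : ℝ) ≥
        -(ρ * ‖H (hybrid a b ((l : ℕ) + 1)) - H (hybrid a b (l : ℕ))‖ *
            ‖H (hybrid a b ((k : ℕ) + 1)) - H (hybrid a b (k : ℕ))‖)) :
    ‖H a - H b‖ ^ 2 ≥ (1 - ρ * ((L : ℝ) - 1)) * ∑ l, η l * ‖a l - b l‖ ^ 2 := by
  set Δ : Fin L → F := fun l => H (hybrid a b ((l : ℕ) + 1)) - H (hybrid a b (l : ℕ))
  have hcoer_Δ (l : Fin L) : η l * ‖a l - b l‖ ^ 2 ≤ ‖Δ l‖ ^ 2 := by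
    simpa using hcoer l _ _ fun k hk => hybrid_succ_apply_of_ne a b hk
  have hsum : ‖H a - H b‖ ^ 2 ≥ (1 - ρ * ((L : ℝ) - 1)) * ∑ l, ‖Δ l‖ ^ 2 := by
    have := one_sub_mul_sum_norm_sq_le_norm_sum_sq Δ hρ hcross
    rwa [Fintype.card_fin, sum_hybrid_increments] at this
  rcases le_or_gt (1 - ρ * ((L : ℝ) - 1)) 0 with hc | hc
  · have hT : 0 ≤ ∑ l, η l * ‖a l - b l‖ ^ 2 :=
      sum_nonneg fun l _ => mul_nonneg (hη l) (sq_nonneg _)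
    exact (mul_nonpos_of_nonpos_of_nonneg hc hT).trans (sq_nonneg _)
  · calc (1 - ρ * ((L : ℝ) - 1)) * ∑ l, η l * ‖a l - b l‖ ^ 2
        ≤ (1 - ρ * ((L : ℝ) - 1)) * ∑ l, ‖Δ l‖ ^ 2 := by gcongr with l; exact hcoer_Δ l
      _ ≤ ‖H a - H b‖ ^ 2 := hsum
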